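/- arXiv:1405.5034 — 6 statements merged into one kernel-verified Lean document; each statement's English description precedes it below -/
import Mathlib

section
/- Every Z-contraction is a Meir-Keeler contraction. That is, if T : X → X is a Z-contraction with respect to some simulation function ζ, then for every ε > 0 there exists δ > 0 such that for all x, y ∈ X, ε ≤ d(x,y) < ε + δ implies d(Tx, Ty) < ε. -/
open Filter Topology

def IsSimulation (ζ : ℝ → ℝ → ℝ) : Prop :=
  ζ 0 0 = 0 ∧
  (∀ t s : ℝ, 0 < t → 0 < s → ζ t s < s - t) ∧
  (∀ (t s : ℕ → ℝ) (L : ℝ), 0 < L → (∀ n, 0 < t n) → (∀ n, 0 < s n) →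
    Tendsto t atTop (𝓝 L) → Tendsto s atTop (𝓝 L) →
    Filter.limsup (fun n => ζ (t n) (s n)) atTop < 0)

def IsMeirKeeler {X : Type*} [MetricSpace X] (T : X → X) : Prop :=
  ∀ ε > 0, ∃ δ > 0, ∀ x y : X, ε ≤ dist x y → dist x y < ε + δ → dist (T x) (T y) < ε

def IsZContraction {X : Type*} [MetricSpace X] (T : X → X) (ζ : ℝ → ℝ → ℝ) : Prop :=
  IsSimulation ζ ∧ ∀ x y : X, 0 ≤ ζ (dist (T x) (T y)) (dist x y)

/-! If `T` failed the Meir–Keeler condition at `ε`, there would be pairs with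
`ε ≤ d(xₙ, yₙ) < ε + 1/(n+1)` and `ε ≤ d(Txₙ, Tyₙ)`. A Z-contraction strictly shrinks distances,
so both distance sequences tend to `ε`, and condition (iii) makes `ζ` eventually negative along
them, contradicting `0 ≤ ζ (d(Txₙ, Tyₙ)) (d(xₙ, yₙ))`. -/

theorem IsSimulation.eventually_neg {ζ : ℝ → ℝ → ℝ} (hζ : IsSimulation ζ) {t s : ℕ → ℝ} {L : ℝ}
    (hL : 0 < L) (ht_pos : ∀ n, 0 < t n) (hs_pos : ∀ n, 0 < s n)
    (ht : Tendsto t atTop (𝓝 L)) (hs : Tendsto s atTop (𝓝 L)) :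
    ∀ᶠ n in atTop, ζ (t n) (s n) < 0 := by
  -- Without an upper bound the real `limsup` would be a junk value; `s n - t n → 0` gives one.
  have hbdd : IsBoundedUnder (· ≤ ·) atTop fun n => ζ (t n) (s n) :=
    (hs.sub ht).isBoundedUnder_le.mono_le
      (Eventually.of_forall fun n => (hζ.2.1 _ _ (ht_pos n) (hs_pos n)).le)
  exact eventually_lt_of_limsup_lt (hζ.2.2 t s L hL ht_pos hs_pos ht hs) hbdd

theorem IsZContraction.dist_lt {X : Type*} [MetricSpace X] {T : X → X} {ζ : ℝ → ℝ → ℝ}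
    (hT : IsZContraction T ζ) {x y : X} (hxy : x ≠ y) : dist (T x) (T y) < dist x y := by
  rcases eq_or_ne (T x) (T y) with hTxy | hTxy
  · simpa [hTxy] using hxy
  · have hsim := hT.1.2.1 _ _ (dist_pos.mpr hTxy) (dist_pos.mpr hxy)
    linarith [hT.2 x y]

theorem z_contraction_is_meir_keeler {X : Type*} [MetricSpace X] (T : X → X)
    (ζ : ℝ → ℝ → ℝ) (hT : IsZContraction T ζ) : IsMeirKeeler T := by
  intro ε hε
  by_contra! h
  choose x y hle hlt hT_ge using fun n : ℕ => h (1 / (n + 1)) Nat.one_div_pos_of_nat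
  have hδ : Tendsto (fun n : ℕ => ε + 1 / ((n : ℝ) + 1)) atTop (𝓝 ε) := by
    simpa using tendsto_const_nhds.add (tendsto_one_div_add_atTop_nhds_zero_nat (𝕜 := ℝ))
  have hs : Tendsto (fun n => dist (x n) (y n)) atTop (𝓝 ε) :=
    tendsto_of_tendsto_of_tendsto_of_le_of_le tendsto_const_nhds hδ hle fun n => (hlt n).le
  have ht : Tendsto (fun n => dist (T (x n)) (T (y n))) atTop (𝓝 ε) := by
    refine tendsto_of_tendsto_of_tendsto_of_le_of_le tendsto_const_nhds hδ hT_ge fun n => ?_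
    exact (hT.dist_lt (dist_pos.mp (hε.trans_le (hle n)))).le.trans (hlt n).le
  obtain ⟨n, hn⟩ := (hT.1.eventually_neg hε (fun n => hε.trans_le (hT_ge n))
    (fun n => hε.trans_le (hle n)) ht hs).exists
  exact hn.not_ge (hT.2 _ _)
end

section
/- Every weakly type contraction is a Meir-Keeler contraction: if T satisfies ψ(d(Tx,Ty)) ≤ α(d(x,y)) − β(d(x,y)) for all x,y, with ψ nondecreasing, α continuous, β lower semicontinuous, and ψ(t) − α(t) + β(t) > 0 for all t > 0, then for every ε > 0 there exists δ > 0 such that ε ≤ d(x,y) < ε + δ implies d(Tx,Ty) < ε. -/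
open Filter Topology

/-!
Fix `ε > 0`. Since `α` is continuous and `β` lower semicontinuous, `α - β` is upper
semicontinuous, so the strict inequality `α ε - β ε < ψ ε` persists for `d(x, y)` in some
interval `[ε, ε + δ)`. For such `x, y` we get `ψ (d(Tx, Ty)) ≤ α (d(x, y)) - β (d(x, y)) < ψ ε`,
and monotonicity of `ψ` forces `d(Tx, Ty) < ε`.
-/

theorem isMeirKeeler_of_eventually_nhdsGE {X : Type*} [MetricSpace X] {T : X → X}
    (h : ∀ ε > 0, ∀ᶠ t in 𝓝[≥] ε, ∀ x y : X, dist x y = t → dist (T x) (T y) < ε) :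
    IsMeirKeeler T := by
  intro ε hε
  obtain ⟨u, hεu, hIco⟩ := mem_nhdsGE_iff_exists_Ico_subset.1 (h ε hε)
  exact ⟨u - ε, sub_pos.2 hεu, fun x y hle hlt => hIco ⟨hle, by linarith⟩ x y rfl⟩

theorem weakly_type_is_meir_keeler_general {X : Type*} [MetricSpace X] (T : X → X)
    (ψ α β : ℝ → ℝ)
    (hψmono : MonotoneOn ψ (Set.Ici 0))
    (hα : ContinuousOn α (Set.Ici 0))
    (hβ : LowerSemicontinuousOn β (Set.Ici 0))
    (hpos : ∀ t : ℝ, 0 < t → α t - β t < ψ t)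
    (hT : ∀ x y : X, ψ (dist (T x) (T y)) ≤ α (dist x y) - β (dist x y)) :
    IsMeirKeeler T := by
  refine isMeirKeeler_of_eventually_nhdsGE fun ε hε => ?_
  have husc : UpperSemicontinuousOn (fun t => α t - β t) (Set.Ici 0) := by
    simpa only [sub_eq_add_neg, Pi.neg_apply] using hα.upperSemicontinuousOn.add hβ.neg
  have hlt : ∀ᶠ t in 𝓝[≥] ε, α t - β t < ψ ε :=
    nhdsWithin_mono _ (Set.Ici_subset_Ici.2 hε.le) (husc ε hε.le _ (hpos ε hε))
  filter_upwards [hlt] with t ht x y hxy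
  subst hxy
  exact hψmono.reflect_lt dist_nonneg hε.le ((hT x y).trans_lt ht)

theorem weakly_type_is_meir_keeler {X : Type*} [MetricSpace X] (T : X → X)
    (ψ α β : ℝ → ℝ)
    (hψ0 : ∀ t, 0 ≤ t → 0 ≤ ψ t) (hα0 : ∀ t, 0 ≤ t → 0 ≤ α t) (hβ0 : ∀ t, 0 ≤ t → 0 ≤ β t)
    (hψmono : MonotoneOn ψ (Set.Ici 0))
    (hα : ContinuousOn α (Set.Ici 0))
    (hβ : LowerSemicontinuousOn β (Set.Ici 0))
    (hpos : ∀ t : ℝ, 0 < t → α t - β t < ψ t)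
    (hT : ∀ x y : X, ψ (dist (T x) (T y)) ≤ α (dist x y) - β (dist x y)) :
    IsMeirKeeler T :=
  weakly_type_is_meir_keeler_general T ψ α β hψmono hα hβ hpos hT
end

section
/- Let (X,d) be a complete nonempty metric space and T a weakly type contraction (ψ(d(Tx,Ty)) ≤ α(d(x,y)) − β(d(x,y)) with ψ nondecreasing, α continuous, β lower semicontinuous, ψ(t) − α(t) + β(t) > 0 for all t > 0). Then T has a unique fixed point, and for every x₀ ∈ X the Picard iterates xₙ = T xₙ₋₁ converge to this fixed point. -/
open Filter Topology

lemma picard_converges {X : Type*} [MetricSpace X] [CompleteSpace X] (T : X → X)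
    (mk : ∀ ε > 0, ∃ δ > 0, ∀ x y : X,
      ε ≤ dist x y → dist x y < ε + δ → dist (T x) (T y) < ε)
    (x₀ : X) : ∃ u : X, T u = u ∧ Tendsto (fun n => T^[n] x₀) atTop (𝓝 u) := by
  have hle : ∀ x y : X, dist (T x) (T y) ≤ dist x y := by
    intro x y
    rcases eq_or_lt_of_le (dist_nonneg (x := x) (y := y)) with h | h
    · have hxy : x = y := dist_eq_zero.mp h.symm
      simp [hxy]
    · obtain ⟨δ, hδ, h2⟩ := mk (dist x y) h
      exact (h2 x y le_rfl (by linarith)).le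
  set x : ℕ → X := fun n => T^[n] x₀ with hxdef
  have hx : ∀ n, x (n + 1) = T (x n) := fun n => Function.iterate_succ_apply' T n x₀
  set a : ℕ → ℝ := fun n => dist (x (n + 1)) (x n) with hadef
  have anti : Antitone a := by
    apply antitone_nat_of_succ_le
    intro n
    have : a (n + 1) = dist (T (x (n + 1))) (T (x n)) := by rw [hadef]; simp [hx]
    rw [this]
    exact hle _ _
  have hbdd : BddBelow (Set.range a) := ⟨0, by rintro _ ⟨n, rfl⟩; exact dist_nonneg⟩
  have htend : Tendsto a atTop (𝓝 (⨅ n, a n)) := tendsto_atTop_ciInf anti hbdd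
  have hr_le : ∀ n, (⨅ n, a n) ≤ a n := fun n => ciInf_le hbdd n
  have hr0 : (⨅ n, a n) = 0 := by
    by_contra hne
    have hrpos : 0 < ⨅ n, a n :=
      lt_of_le_of_ne (le_ciInf fun n => dist_nonneg) (Ne.symm hne)
    obtain ⟨δ, hδ, h2⟩ := mk _ hrpos
    have : ∀ᶠ n in atTop, a n < (⨅ n, a n) + δ :=
      htend.eventually_lt_const (by linarith)
    obtain ⟨n, hn⟩ := this.exists
    have h3 : dist (T (x (n + 1))) (T (x n)) < ⨅ n, a n := h2 _ _ (hr_le n) hn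
    have h4 : a (n + 1) = dist (T (x (n + 1))) (T (x n)) := by rw [hadef]; simp [hx]
    have := hr_le (n + 1)
    rw [h4] at this
    linarith
  rw [hr0] at htend
  have hcauchy : CauchySeq x := by
    rw [Metric.cauchySeq_iff]
    intro ε hε
    obtain ⟨δ, hδ, h2⟩ := mk (ε / 5) (by linarith)
    set δ' : ℝ := min δ (ε / 5) with hδ'def
    have hδ'pos : 0 < δ' := lt_min hδ (by linarith)
    have hδ'le : δ' ≤ δ := min_le_left _ _
    have hδ'le2 : δ' ≤ ε / 5 := min_le_right _ _
    obtain ⟨N, hN⟩ := (htend.eventually_lt_const hδ'pos).exists_forall_of_atTop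
    have hNN : a N < δ' := hN N le_rfl
    have key : ∀ m, N ≤ m → dist (x m) (x N) < ε / 5 + δ' := by
      intro m hm
      induction m, hm using Nat.le_induction with
      | base => simp; linarith
      | succ m hm ih =>
        have h3 : dist (x (m + 1)) (x (N + 1)) ≤ ε / 5 := by
          rw [hx, hx]
          rcases le_or_gt (dist (x m) (x N)) (ε / 5) with h | h
          · exact (hle _ _).trans h
          · exact (h2 _ _ h.le (by linarith)).le
        calc dist (x (m + 1)) (x N) ≤ dist (x (m + 1)) (x (N + 1)) + dist (x (N + 1)) (x N) :=
              dist_triangle _ _ _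
          _ < ε / 5 + δ' := by have := hNN; rw [hadef] at this; linarith
    refine ⟨N, fun m hm n hn => ?_⟩
    calc dist (x m) (x n) ≤ dist (x m) (x N) + dist (x N) (x n) := dist_triangle _ _ _
      _ = dist (x m) (x N) + dist (x n) (x N) := by rw [dist_comm (x N)]
      _ < (ε / 5 + δ') + (ε / 5 + δ') := by
          have := key m hm; have := key n hn; linarith
      _ < ε := by linarith
  obtain ⟨u, hu⟩ := cauchySeq_tendsto_of_complete hcauchy
  have hlip : LipschitzWith 1 T :=
    LipschitzWith.of_dist_le_mul fun p q => by simpa using hle p q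
  have h1 : Tendsto (fun n => x (n + 1)) atTop (𝓝 u) :=
    hu.comp (tendsto_add_atTop_nat 1)
  have h2 : Tendsto (fun n => T (x n)) atTop (𝓝 (T u)) :=
    (hlip.continuous.tendsto u).comp hu
  have h3 : (fun n => T (x n)) = fun n => x (n + 1) := by funext n; rw [hx]
  rw [h3] at h2
  exact ⟨u, (tendsto_nhds_unique h2 h1), hu⟩

theorem weakly_type_fixed_point {X : Type*} [MetricSpace X] [CompleteSpace X] [Nonempty X]
    (T : X → X) (ψ α β : ℝ → ℝ)
    (hψ0 : ∀ t, 0 ≤ t → 0 ≤ ψ t) (hα0 : ∀ t, 0 ≤ t → 0 ≤ α t) (hβ0 : ∀ t, 0 ≤ t → 0 ≤ β t)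
    (hψmono : MonotoneOn ψ (Set.Ici 0))
    (hα : ContinuousOn α (Set.Ici 0))
    (hβ : LowerSemicontinuousOn β (Set.Ici 0))
    (hpos : ∀ t : ℝ, 0 < t → α t - β t < ψ t)
    (hT : ∀ x y : X, ψ (dist (T x) (T y)) ≤ α (dist x y) - β (dist x y)) :
    ∃ u : X, T u = u ∧ (∀ v : X, T v = v → v = u) ∧
      ∀ x₀ : X, Tendsto (fun n => T^[n] x₀) atTop (𝓝 u) := by
  have hlt : ∀ x y : X, 0 < dist x y → dist (T x) (T y) < dist x y := by
    intro x y h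
    by_contra hcon
    push_neg at hcon
    have h1 : ψ (dist x y) ≤ ψ (dist (T x) (T y)) :=
      hψmono (le_of_lt h) (le_trans h.le hcon) hcon
    have h2 := hT x y
    have := hpos (dist x y) h
    linarith
  have hle : ∀ x y : X, dist (T x) (T y) ≤ dist x y := by
    intro x y
    rcases eq_or_lt_of_le (dist_nonneg (x := x) (y := y)) with h | h
    · have hxy : x = y := dist_eq_zero.mp h.symm
      simp [hxy]
    · exact (hlt x y h).le
  have mk : ∀ ε > 0, ∃ δ > 0, ∀ x y : X,
      ε ≤ dist x y → dist x y < ε + δ → dist (T x) (T y) < ε := by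
    by_contra hmk
    push_neg at hmk
    obtain ⟨ε, hε, hmk⟩ := hmk
    have hchoice : ∀ k : ℕ, ∃ p q : X, ε ≤ dist p q ∧ dist p q < ε + 1 / (k + 1) ∧
        ε ≤ dist (T p) (T q) := by
      intro k
      obtain ⟨p, q, h1, h2, h3⟩ := hmk (1 / (k + 1)) (by positivity)
      exact ⟨p, q, h1, h2, h3⟩
    choose p q hs1 hs2 ht1 using hchoice
    set s : ℕ → ℝ := fun k => dist (p k) (q k) with hsdef
    set t : ℕ → ℝ := fun k => dist (T (p k)) (T (q k)) with htdef
    have hst : ∀ k, t k ≤ s k := fun k => hle _ _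
    have hs_tend : Tendsto s atTop (𝓝 ε) := by
      have h1 : Tendsto (fun k : ℕ => ε + 1 / (k + 1 : ℝ)) atTop (𝓝 (ε + 0)) :=
        tendsto_const_nhds.add tendsto_one_div_add_atTop_nhds_zero_nat
      rw [add_zero] at h1
      exact tendsto_of_tendsto_of_tendsto_of_le_of_le tendsto_const_nhds h1
        (fun k => hs1 k) (fun k => (hs2 k).le)
    have hs_mem : ∀ k, s k ∈ Set.Ici (0 : ℝ) := fun k => dist_nonneg
    have hs_tendW : Tendsto s atTop (𝓝[Set.Ici 0] ε) :=
      tendsto_nhdsWithin_of_tendsto_nhds_of_eventually_within s hs_tend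
        (Eventually.of_forall hs_mem)
    have hεmem : ε ∈ Set.Ici (0 : ℝ) := le_of_lt hε
    have hα_tend : Tendsto (fun k => α (s k)) atTop (𝓝 (α ε)) :=
      (hα ε hεmem).tendsto.comp hs_tendW
    have hkey : ∀ k, ψ ε ≤ α (s k) - β (s k) := by
      intro k
      have h1 : ψ ε ≤ ψ (t k) :=
        hψmono hεmem (le_trans hεmem (ht1 k)) (ht1 k)
      exact h1.trans (hT (p k) (q k))
    have hfinal : ψ ε ≤ α ε - β ε := by
      apply le_of_forall_pos_le_add
      intro η hη
      have e1 : ∀ᶠ k in atTop, α (s k) < α ε + η / 2 :=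
        hα_tend.eventually_lt_const (by linarith)
      have e2 : ∀ᶠ k in atTop, β ε - η / 2 < β (s k) :=
        hs_tendW.eventually (hβ ε hεmem (β ε - η / 2) (by linarith))
      obtain ⟨k, hk1, hk2⟩ := (e1.and e2).exists
      have := hkey k
      linarith
    have := hpos ε hε
    linarith
  obtain ⟨u, hu, hu_tend⟩ := picard_converges T mk (Classical.arbitrary X)
  have huniq : ∀ v : X, T v = v → v = u := by
    intro v hv
    by_contra hne
    have hd : 0 < dist v u := dist_pos.mpr hne
    have := hlt v u hd
    rw [hv, hu] at this
    exact lt_irrefl _ this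
  refine ⟨u, hu, huniq, fun x₀ => ?_⟩
  obtain ⟨u', hu', htend'⟩ := picard_converges T mk x₀
  rwa [huniq u' hu'] at htend'
end

section
/- Let (X,d) be a complete nonempty metric space and T : X → X a Z-contraction with respect to some simulation function. Then T has a unique fixed point u, and for every x₀ ∈ X the Picard sequence xₙ = T xₙ₋₁ converges to u. -/
open Filter Topology

/-!
A Z-contraction is a Meir–Keeler map: otherwise there are pairs `(xₙ, yₙ)` with `d(xₙ, yₙ)` and
`d(Txₙ, Tyₙ)` both tending to some `ε > 0`, and `ζ(d(Txₙ, Tyₙ), d(xₙ, yₙ)) ≥ 0` contradicts the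
limsup axiom of simulation functions. For a Meir–Keeler map the Picard steps `d(xₙ₊₁, xₙ)` tend
to `0`, and once a step is below `δ(ε)` the whole tail of the orbit stays within `ε + δ` of that
point, so the orbit is Cauchy. Its limit is fixed since `T` is continuous, and it is the only
fixed point since `T` strictly decreases distances.
-/

open Function

lemma IsSimulation.exists_neg_of_tendsto {ζ : ℝ → ℝ → ℝ} (hζ : IsSimulation ζ) {t s : ℕ → ℝ}
    {L : ℝ} (hL : 0 < L) (ht : ∀ n, 0 < t n) (hs : ∀ n, 0 < s n)
    (htL : Tendsto t atTop (𝓝 L)) (hsL : Tendsto s atTop (𝓝 L)) :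
    ∃ n, ζ (t n) (s n) < 0 := by
  -- in `ℝ` an unbounded `limsup` is a junk `0`; here `ζ (t n) (s n) < s n - t n → 0` bounds it
  have hbdd : IsBoundedUnder (· ≤ ·) atTop fun n => ζ (t n) (s n) :=
    (hsL.sub htL).isBoundedUnder_le.mono_le
      (Eventually.of_forall fun n => (hζ.2.1 _ _ (ht n) (hs n)).le)
  exact (eventually_lt_of_limsup_lt (hζ.2.2 t s L hL ht hs htL hsL) hbdd).exists

section

variable {X : Type*} [MetricSpace X] {T : X → X}

namespace IsZContraction

variable {ζ : ℝ → ℝ → ℝ}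

lemma dist_le (hT : IsZContraction T ζ) (x y : X) : dist (T x) (T y) ≤ dist x y := by
  rcases eq_or_ne x y with rfl | hxy
  · simp
  rcases (dist_nonneg : 0 ≤ dist (T x) (T y)).eq_or_lt with h | h
  · exact h ▸ dist_nonneg
  · linarith [hT.1.2.1 _ _ h (dist_pos.2 hxy), hT.2 x y]

theorem isMeirKeeler (hT : IsZContraction T ζ) : IsMeirKeeler T := by
  intro ε hε
  by_contra! H
  choose x y hε_le hlt_add hε_le_T using fun n : ℕ => H (1 / (n + 1)) Nat.one_div_pos_of_nat
  have hs : Tendsto (fun n => dist (x n) (y n)) atTop (𝓝 ε) :=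
    tendsto_of_tendsto_of_tendsto_of_le_of_le tendsto_const_nhds
      (by simpa using tendsto_one_div_add_atTop_nhds_zero_nat.const_add ε) hε_le
      fun n => (hlt_add n).le
  have ht : Tendsto (fun n => dist (T (x n)) (T (y n))) atTop (𝓝 ε) :=
    tendsto_of_tendsto_of_tendsto_of_le_of_le tendsto_const_nhds hs hε_le_T
      fun n => hT.dist_le _ _
  obtain ⟨n, hn⟩ := hT.1.exists_neg_of_tendsto hε (fun n => hε.trans_le (hε_le_T n))
    (fun n => hε.trans_le (hε_le n)) ht hs
  exact hn.not_ge (hT.2 _ _)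

end IsZContraction

namespace IsMeirKeeler

lemma dist_lt (hT : IsMeirKeeler T) {x y : X} (hxy : x ≠ y) : dist (T x) (T y) < dist x y := by
  obtain ⟨δ, hδ, H⟩ := hT _ (dist_pos.2 hxy)
  exact H x y le_rfl (lt_add_of_pos_right _ hδ)

lemma dist_le (hT : IsMeirKeeler T) (x y : X) : dist (T x) (T y) ≤ dist x y := by
  rcases eq_or_ne x y with rfl | hxy
  · simp
  · exact (hT.dist_lt hxy).le

lemma lipschitzWith_one (hT : IsMeirKeeler T) : LipschitzWith 1 T :=
  LipschitzWith.of_dist_le_mul fun x y => by simpa using hT.dist_le x y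

lemma eq_of_isFixedPt (hT : IsMeirKeeler T) {x y : X} (hx : IsFixedPt T x)
    (hy : IsFixedPt T y) : x = y := by
  by_contra hxy
  simpa [hx.eq, hy.eq] using hT.dist_lt hxy

lemma tendsto_dist_iterate_succ (hT : IsMeirKeeler T) (x : X) :
    Tendsto (fun n => dist (T^[n + 1] x) (T^[n] x)) atTop (𝓝 0) := by
  set d : ℕ → ℝ := fun n => dist (T^[n + 1] x) (T^[n] x)
  have hd_succ (n : ℕ) : d (n + 1) = dist (T (T^[n + 1] x)) (T (T^[n] x)) := by
    simp only [d, iterate_succ_apply']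
  have hanti : Antitone d :=
    antitone_nat_of_succ_le fun n => (hd_succ n).trans_le (hT.dist_le _ _)
  have hbdd : BddBelow (Set.range d) := ⟨0, by rintro _ ⟨n, rfl⟩; exact dist_nonneg⟩
  have hlim := tendsto_atTop_ciInf hanti hbdd
  suffices h : ⨅ n, d n = 0 by rwa [h] at hlim
  by_contra hr
  have hr_pos : 0 < ⨅ n, d n := (le_ciInf fun n => dist_nonneg).lt_of_ne' hr
  obtain ⟨δ, hδ, H⟩ := hT _ hr_pos
  obtain ⟨N, hN⟩ : ∃ N, d N < (⨅ n, d n) + δ :=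
    exists_lt_of_ciInf_lt (lt_add_of_pos_right _ hδ)
  exact (ciInf_le hbdd (N + 1)).not_gt ((hd_succ N).trans_lt (H _ _ (ciInf_le hbdd N) hN))

lemma dist_iterate_lt (hT : IsMeirKeeler T) {ε δ : ℝ} (hε : 0 < ε)
    (H : ∀ x y : X, ε ≤ dist x y → dist x y < ε + δ → dist (T x) (T y) < ε) {x : X}
    (hx : dist (T x) x < δ) (k : ℕ) : dist (T^[k] x) x < ε + δ := by
  induction k with
  | zero => simpa using add_pos_of_pos_of_nonneg hε ((dist_nonneg : 0 ≤ dist (T x) x).trans hx.le)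
  | succ k ih =>
    have hstep : dist (T (T^[k] x)) (T x) < ε := by
      rcases le_or_gt ε (dist (T^[k] x) x) with h | h
      · exact H _ _ h ih
      · exact (hT.dist_le _ _).trans_lt h
    calc dist (T^[k + 1] x) x ≤ dist (T (T^[k] x)) (T x) + dist (T x) x := by
          rw [iterate_succ_apply']; exact dist_triangle _ _ _
      _ < ε + δ := add_lt_add hstep hx

lemma cauchySeq_iterate (hT : IsMeirKeeler T) (x : X) : CauchySeq fun n => T^[n] x := by
  refine Metric.cauchySeq_iff'.2 fun ε hε => ?_
  obtain ⟨δ, hδ, H⟩ := hT (ε / 2) (half_pos hε)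
  have H' : ∀ x y : X, ε / 2 ≤ dist x y → dist x y < ε / 2 + min δ (ε / 2) →
      dist (T x) (T y) < ε / 2 :=
    fun x y h₁ h₂ => H x y h₁ (h₂.trans_le (by gcongr; exact min_le_left _ _))
  obtain ⟨N, hN⟩ := ((hT.tendsto_dist_iterate_succ x).eventually
    (gt_mem_nhds (lt_min hδ (half_pos hε)))).exists
  rw [iterate_succ_apply'] at hN
  refine ⟨N, fun n hn => ?_⟩
  obtain ⟨k, rfl⟩ := Nat.exists_eq_add_of_le' hn
  rw [iterate_add_apply]
  calc dist (T^[k] (T^[N] x)) (T^[N] x) < ε / 2 + min δ (ε / 2) :=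
        hT.dist_iterate_lt (half_pos hε) H' hN k
    _ ≤ ε := by linarith [min_le_right δ (ε / 2)]

lemma exists_isFixedPt_tendsto_iterate [CompleteSpace X] (hT : IsMeirKeeler T) (x : X) :
    ∃ u, IsFixedPt T u ∧ Tendsto (fun n => T^[n] x) atTop (𝓝 u) := by
  obtain ⟨u, hu⟩ := cauchySeq_tendsto_of_complete (hT.cauchySeq_iterate x)
  exact ⟨u, isFixedPt_of_tendsto_iterate hu hT.lipschitzWith_one.continuous.continuousAt, hu⟩

end IsMeirKeeler

end

theorem z_contraction_fixed_point {X : Type*} [MetricSpace X] [CompleteSpace X] [Nonempty X]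
    (T : X → X) (ζ : ℝ → ℝ → ℝ) (hT : IsZContraction T ζ) :
    ∃ u : X, T u = u ∧ (∀ v : X, T v = v → v = u) ∧
      ∀ x₀ : X, Tendsto (fun n => T^[n] x₀) atTop (𝓝 u) := by
  have hMK := hT.isMeirKeeler
  obtain ⟨u, hu, -⟩ := hMK.exists_isFixedPt_tendsto_iterate (Classical.arbitrary X)
  refine ⟨u, hu, fun v hv => hMK.eq_of_isFixedPt hv hu, fun x₀ => ?_⟩
  obtain ⟨w, hw, hlim⟩ := hMK.exists_isFixedPt_tendsto_iterate x₀
  rwa [hMK.eq_of_isFixedPt hw hu] at hlim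
end

section
/- If T : X → X is a Z-contraction and there exist sequences {x_n}, {y_n} in X such that d(x_n, y_n) ≥ ε₀ for all n, lim d(x_n, y_n) = ε₀ > 0, and d(Tx_n, Ty_n) ≥ ε₀ for all n, then lim d(Tx_n, Ty_n) = ε₀ and lim ζ(d(Tx_n,Ty_n), d(x_n,y_n)) = 0. -/
open Filter Topology

theorem z_contraction_limit_lemma {X : Type*} [MetricSpace X] (T : X → X)
    (ζ : ℝ → ℝ → ℝ) (hT : IsZContraction T ζ) (ε₀ : ℝ) (hε₀ : 0 < ε₀)
    (x y : ℕ → X)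
    (hge : ∀ n, ε₀ ≤ dist (x n) (y n))
    (hlim : Tendsto (fun n => dist (x n) (y n)) atTop (𝓝 ε₀))
    (hTge : ∀ n, ε₀ ≤ dist (T (x n)) (T (y n))) :
    Tendsto (fun n => dist (T (x n)) (T (y n))) atTop (𝓝 ε₀) ∧
      Tendsto (fun n => ζ (dist (T (x n)) (T (y n))) (dist (x n) (y n))) atTop (𝓝 0) := by
  obtain ⟨⟨_, h2, _⟩, hZ⟩ := hT
  have hlt : ∀ n, dist (T (x n)) (T (y n)) < dist (x n) (y n) := by
    intro n
    have h0 := hZ (x n) (y n)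
    have h := h2 (dist (T (x n)) (T (y n))) (dist (x n) (y n))
      (lt_of_lt_of_le hε₀ (hTge n)) (lt_of_lt_of_le hε₀ (hge n))
    linarith
  have hTlim : Tendsto (fun n => dist (T (x n)) (T (y n))) atTop (𝓝 ε₀) :=
    tendsto_of_tendsto_of_tendsto_of_le_of_le tendsto_const_nhds hlim
      (fun n => hTge n) (fun n => (hlt n).le)
  refine ⟨hTlim, ?_⟩
  have hzero : Tendsto (fun n => dist (x n) (y n) - dist (T (x n)) (T (y n)))
      atTop (𝓝 0) := by
    have := hlim.sub hTlim
    simpa using this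
  exact tendsto_of_tendsto_of_tendsto_of_le_of_le tendsto_const_nhds hzero
    (fun n => hZ (x n) (y n))
    (fun n => (h2 _ _ (lt_of_lt_of_le hε₀ (hTge n)) (lt_of_lt_of_le hε₀ (hge n))).le)
end

section
/- A weak contraction in the sense of Rhoades is a Meir-Keeler contraction: if T satisfies d(Tx,Ty) ≤ d(x,y) − φ(d(x,y)) for all x,y, where φ : [0,∞) → [0,∞) is lower semicontinuous with φ(t) > 0 for t > 0, then T is a Meir-Keeler contraction. -/
open Filter Topology

theorem rhoades_is_meir_keeler {X : Type*} [MetricSpace X] (T : X → X)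
    (φ : ℝ → ℝ) (hφ0 : ∀ t, 0 ≤ t → 0 ≤ φ t)
    (hφ : LowerSemicontinuousOn φ (Set.Ici 0))
    (hφpos : ∀ t : ℝ, 0 < t → 0 < φ t) (hφzero : φ 0 = 0)
    (hT : ∀ x y : X, dist (T x) (T y) ≤ dist x y - φ (dist x y)) :
    IsMeirKeeler T := by
  intro ε hε
  have hφε : 0 < φ ε := hφpos ε hε
  have h := hφ ε (le_of_lt hε) (φ ε / 2) (half_lt_self hφε)
  rw [eventually_nhdsWithin_iff, Metric.eventually_nhds_iff] at h
  obtain ⟨η, hη, hball⟩ := h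
  refine ⟨min η (φ ε / 2), lt_min hη (half_pos hφε), fun x y h1 h2 => ?_⟩
  have hd : dist (dist x y) ε < η := by
    rw [Real.dist_eq, abs_lt]
    constructor
    · linarith
    · have := min_le_left η (φ ε / 2); linarith
  have hφd : φ ε / 2 < φ (dist x y) :=
    hball hd (le_trans (le_of_lt hε) h1)
  have := hT x y
  have h3 : min η (φ ε / 2) ≤ φ ε / 2 := min_le_right _ _
  linarith
end
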